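/- (Jensen bound) Let C = ⊕_{t=1}^{g} ⟨θ_t⟩ □ C_t be a QC code in concatenated form with constituents ordered so that 0 < d(C_1) ≤ d(C_2) ≤ ⋯ ≤ d(C_g). Then the minimum Hamming distance of C satisfies d(C) ≥ min over 1 ≤ e ≤ g of d(C_e) · d(⟨θ_1⟩ ⊕ ⋯ ⊕ ⟨θ_e⟩). -/

import Mathlib

set_option maxHeartbeats 1000000

open Polynomial

/-- Hamming weight of a vector (number of nonzero coordinates). -/
noncomputable def wtv {n : ℕ} {α : Type*} [Zero α] (v : Fin n → α) : ℕ :=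
  (@Finset.filter _ (fun i => v i ≠ 0) (Classical.decPred _) Finset.univ).card

/-- Minimum Hamming distance of a (nonzero) code given as a set of vectors. -/
noncomputable def minDistSet {n : ℕ} {α : Type*} [Zero α] (S : Set (Fin n → α)) : ℕ :=
  sInf {w | ∃ v ∈ S, v ≠ 0 ∧ w = wtv v}

/-- The minimal cyclic code of length `m` over `F` with check polynomial `f`. -/
def minimalCyclicCode (F : Type*) [Field F] (m : ℕ) (f : Polynomial F) :
    Set (Fin m → F) :=
  {v | (X ^ m - C 1) ∣ (∑ k : Fin m, C (v k) * X ^ (k : ℕ)) * f}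

/-- The concatenated code `⊕_t ⟨θ_t⟩ □ C_t`. -/
def concatCode {F : Type*} [Field F] {m ℓ s : ℕ} {f : Fin s → Polynomial F}
    (ψ : ∀ t, AdjoinRoot (f t) →ₗ[F] (Fin m → F))
    (Cs : ∀ t, Submodule (AdjoinRoot (f t)) (Fin ℓ → AdjoinRoot (f t))) :
    Set (Fin m → Fin ℓ → F) :=
  {c | ∃ lam : ∀ t, Fin ℓ → AdjoinRoot (f t),
    (∀ t, lam t ∈ Cs t) ∧ ∀ k j, c k j = ∑ t, ψ t (lam t j) k}

/-- The cyclic code `⟨θ_1⟩ ⊕ ⋯ ⊕ ⟨θ_e⟩`: sums of elements of the minimal cyclic codes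
indexed by `t ≤ e`, via the identifications `ψ_t`. -/
def idemSumCode {F : Type*} [Field F] {m s : ℕ} {f : Fin s → Polynomial F}
    (ψ : ∀ t, AdjoinRoot (f t) →ₗ[F] (Fin m → F)) (e : Fin s) :
    Set (Fin m → F) :=
  {v | ∃ δ : ∀ t, AdjoinRoot (f t), (∀ t, ¬ t ≤ e → δ t = 0) ∧ v = ∑ t, ψ t (δ t)}

/-! Choose `e` maximal with `λ_e ≠ 0`. Every column `j` of the codeword `c` equals
`∑_{t ≤ e} ψ_t(λ_t j)`, so it lies in `⟨θ_1⟩ ⊕ ⋯ ⊕ ⟨θ_e⟩`; since the sum of the minimal cyclic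
codes is direct, the column is nonzero as soon as `λ_e j ≠ 0`. Hence at least `d(C_e)` columns
have weight at least `d(⟨θ_1⟩ ⊕ ⋯ ⊕ ⟨θ_e⟩)`. The directness comes from the coprimality of the
factors `f_t` of `X^m - 1`. -/

theorem prod_dvd_of_forall_dvd_mul_of_sum_eq_zero {R ι : Type*} [CommRing R] [Fintype ι]
    {f p : ι → R} (hf : Pairwise fun i j => IsCoprime (f i) (f j))
    (hp : ∀ t, (∏ u, f u) ∣ p t * f t) (hsum : ∑ t, p t = 0) (t : ι) :
    (∏ u, f u) ∣ p t := by
  classical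
  have hprod : f t * ∏ u ∈ Finset.univ.erase t, f u = ∏ u, f u :=
    Finset.mul_prod_erase _ _ (Finset.mem_univ t)
  have hcop : IsCoprime (f t) (∏ u ∈ Finset.univ.erase t, f u) :=
    IsCoprime.prod_right fun u hu => hf (Finset.ne_of_mem_erase hu).symm
  have hft : f t ∣ p t := by
    have hpt : p t = -∑ u ∈ Finset.univ.erase t, p u := by
      rw [eq_neg_iff_add_eq_zero, Finset.add_sum_erase _ _ (Finset.mem_univ t), hsum]
    rw [hpt, dvd_neg]
    refine Finset.dvd_sum fun u hu => (hf (Finset.ne_of_mem_erase hu).symm).dvd_of_dvd_mul_right ?_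
    exact (Dvd.intro _ hprod).trans (hp u)
  have hrest : ∏ u ∈ Finset.univ.erase t, f u ∣ p t :=
    hcop.symm.dvd_of_dvd_mul_right ((Dvd.intro_left _ hprod).trans (hp t))
  rw [← hprod]
  exact hcop.mul_dvd hft hrest

namespace Polynomial

variable {K : Type*} [Field K]

theorem isCoprime_of_monic_of_irreducible {p q : K[X]} (hp : Irreducible p) (hq : Irreducible q)
    (hpm : p.Monic) (hqm : q.Monic) (hne : p ≠ q) : IsCoprime p q :=
  hp.coprime_iff_not_dvd.2 fun h =>
    hne (eq_of_monic_of_associated hpm hqm (hp.associated_of_dvd hq h))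

noncomputable def ofVec (m : ℕ) : (Fin m → K) →ₗ[K] K[X] :=
  (degreeLT K m).subtype ∘ₗ (degreeLTEquiv K m).symm.toLinearMap

theorem ofVec_apply {m : ℕ} (v : Fin m → K) : ofVec m v = ∑ k : Fin m, C (v k) * X ^ (k : ℕ) := by
  simp [ofVec, degreeLTEquiv, C_mul_X_pow_eq_monomial]

theorem eq_zero_of_X_pow_sub_one_dvd_ofVec {m : ℕ} (hm : 0 < m) {v : Fin m → K}
    (h : X ^ m - C 1 ∣ ofVec m v) : v = 0 := by
  have hdeg : (ofVec m v).degree < (X ^ m - C 1 : K[X]).degree := by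
    rw [degree_X_pow_sub_C hm]
    exact mem_degreeLT.1 ((degreeLTEquiv K m).symm v).2
  have h0 : ofVec m v = 0 := eq_zero_of_dvd_of_degree_lt h hdeg
  simpa [ofVec] using h0

end Polynomial

theorem eq_zero_of_sum_eq_zero_of_mem_minimalCyclicCode {F ι : Type*} [Field F] [Fintype ι]
    {m : ℕ} (hm : 0 < m) {f : ι → F[X]} (hf : Pairwise fun i j => IsCoprime (f i) (f j))
    (hprod : ∏ t, f t = X ^ m - C 1) {w : ι → Fin m → F}
    (hw : ∀ t, w t ∈ minimalCyclicCode F m (f t)) (hsum : ∑ t, w t = 0) (t : ι) : w t = 0 := by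
  have hw' : ∀ t, (∏ u, f u) ∣ ofVec m (w t) * f t := fun t => by
    rw [hprod, ofVec_apply]
    exact hw t
  refine eq_zero_of_X_pow_sub_one_dvd_ofVec hm ?_
  rw [← hprod]
  exact prod_dvd_of_forall_dvd_mul_of_sum_eq_zero hf hw' (by rw [← map_sum, hsum, map_zero]) t

section Weight

variable {α : Type*} [Zero α]

theorem minDistSet_le_wtv {n : ℕ} {S : Set (Fin n → α)} {v : Fin n → α} (hv : v ∈ S)
    (hv0 : v ≠ 0) : minDistSet S ≤ wtv v :=
  Nat.sInf_le ⟨v, hv, hv0, rfl⟩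

theorem sum_wtv_eq_sum_wtv_transpose {m ℓ : ℕ} (c : Fin m → Fin ℓ → α) :
    ∑ i, wtv (c i) = ∑ j, wtv (fun k => c k j) := by
  simp only [wtv, Finset.card_filter]
  exact Finset.sum_comm

theorem wtv_mul_le_sum_wtv {β : Type*} [Zero β] {m ℓ : ℕ} (c : Fin m → Fin ℓ → α)
    (x : Fin ℓ → β) {D : ℕ} (hcol : ∀ j, x j ≠ 0 → D ≤ wtv (fun k => c k j)) :
    wtv x * D ≤ ∑ i, wtv (c i) := by
  rw [sum_wtv_eq_sum_wtv_transpose, wtv, Finset.card_eq_sum_ones, Finset.sum_mul, one_mul]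
  refine (Finset.sum_le_sum fun j hj => hcol j ?_).trans
    (Finset.sum_le_sum_of_subset (Finset.subset_univ _))
  simpa using hj

end Weight

theorem exists_ne_zero_and_forall_gt_eq_zero {ι : Type*} [Fintype ι] [LinearOrder ι]
    {β : ι → Type*} [∀ i, Zero (β i)] {x : ∀ i, β i} (hx : x ≠ 0) :
    ∃ e, x e ≠ 0 ∧ ∀ t, e < t → x t = 0 := by
  classical
  have hne : (Finset.univ.filter fun t => x t ≠ 0).Nonempty := by
    obtain ⟨t, ht⟩ := Function.ne_iff.1 hx
    exact ⟨t, Finset.mem_filter.2 ⟨Finset.mem_univ t, ht⟩⟩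
  refine ⟨_, (Finset.mem_filter.1 (Finset.max'_mem _ hne)).2, fun t ht => ?_⟩
  by_contra h
  exact ht.not_ge (Finset.le_max' _ t (Finset.mem_filter.2 ⟨Finset.mem_univ t, h⟩))

theorem stmt7_general (F : Type*) [Field F] (m ℓ s : ℕ) (hm : 0 < m)
    -- factorization of x^m − 1 into distinct monic irreducible polynomials
    (f : Fin s → Polynomial F)
    (hirr : ∀ t, Irreducible (f t)) (hmonic : ∀ t, (f t).Monic)
    (hdist : ∀ t t', t ≠ t' → f t ≠ f t')
    (hprod : ∏ t, f t = X ^ m - C 1)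
    -- the identifications ψ_t of E_t with the minimal cyclic codes ⟨θ_t⟩
    (ψ : ∀ t, AdjoinRoot (f t) →ₗ[F] (Fin m → F))
    (hinj : ∀ t, Function.Injective (ψ t))
    (hrange : ∀ t, (Set.range (ψ t)) = minimalCyclicCode F m (f t))
    (Cs : ∀ t, Submodule (AdjoinRoot (f t)) (Fin ℓ → AdjoinRoot (f t))) :
    -- Jensen bound: every nonzero codeword of the concatenated code C has weight at
    -- least min_{1 ≤ e ≤ g} d(C_e) · d(⟨θ_1⟩ ⊕ ⋯ ⊕ ⟨θ_e⟩)
    ∀ c ∈ concatCode ψ Cs, c ≠ 0 →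
      ∃ e : Fin s,
        minDistSet (Cs e : Set (Fin ℓ → AdjoinRoot (f e))) * minDistSet (idemSumCode ψ e)
          ≤ ∑ i : Fin m, wtv (c i) := by
  rintro c ⟨lam, hlam, hc⟩ hc0
  have hcop : Pairwise fun i j => IsCoprime (f i) (f j) := fun t t' h =>
    isCoprime_of_monic_of_irreducible (hirr t) (hirr t') (hmonic t) (hmonic t') (hdist t t' h)
  have hindep : ∀ δ : ∀ t, AdjoinRoot (f t), ∑ t, ψ t (δ t) = 0 → ∀ t, δ t = 0 :=
    fun δ hδ t => (map_eq_zero_iff _ (hinj t)).1 <|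
      eq_zero_of_sum_eq_zero_of_mem_minimalCyclicCode hm hcop hprod
        (fun t => hrange t ▸ Set.mem_range_self _) hδ t
  have hcol : ∀ j, (fun k => c k j) = ∑ t, ψ t (lam t j) := fun j => by
    funext k
    rw [hc k j, Finset.sum_apply]
  have hlam0 : lam ≠ 0 := by
    rintro rfl
    exact hc0 (funext fun k => funext fun j => by simp [hc])
  obtain ⟨e, he, hlast⟩ := exists_ne_zero_and_forall_gt_eq_zero hlam0
  refine ⟨e, ?_⟩
  calc _ ≤ wtv (lam e) * minDistSet (idemSumCode ψ e) :=
        Nat.mul_le_mul_right _ (minDistSet_le_wtv (hlam e) he)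
    _ ≤ ∑ i, wtv (c i) := wtv_mul_le_sum_wtv c (lam e) fun j hj => by
        rw [hcol j]
        refine minDistSet_le_wtv
          ⟨fun t => lam t j, fun t ht => congrFun (hlast t (not_le.1 ht)) j, rfl⟩ ?_
        exact fun h0 => hj (hindep _ h0 e)

theorem stmt7 (F : Type*) [Field F] [Fintype F] (m ℓ s : ℕ) (hm : 0 < m) [NeZero m]
    (hℓ : 0 < ℓ) (hmq : (m : F) ≠ 0)
    -- factorization of x^m − 1 into distinct monic irreducible polynomials
    (f : Fin s → Polynomial F)
    (hirr : ∀ t, Irreducible (f t)) (hmonic : ∀ t, (f t).Monic)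
    (hdist : ∀ t t', t ≠ t' → f t ≠ f t')
    (hprod : ∏ t, f t = X ^ m - C 1)
    -- the identifications ψ_t of E_t with the minimal cyclic codes ⟨θ_t⟩
    (ψ : ∀ t, AdjoinRoot (f t) →ₗ[F] (Fin m → F))
    (hinj : ∀ t, Function.Injective (ψ t))
    (hrange : ∀ t, (Set.range (ψ t)) = minimalCyclicCode F m (f t))
    (hshift : ∀ t (δ : AdjoinRoot (f t)) (k : Fin m),
      ψ t (AdjoinRoot.root (f t) * δ) k = ψ t δ (k - 1))
    -- the outer codes, ordered so that 0 < d(C_1) ≤ d(C_2) ≤ ⋯ ≤ d(C_g)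
    (Cs : ∀ t, Submodule (AdjoinRoot (f t)) (Fin ℓ → AdjoinRoot (f t)))
    (hpos : ∀ t, 0 < minDistSet (Cs t : Set (Fin ℓ → AdjoinRoot (f t))))
    (hmono : ∀ t t' : Fin s, t ≤ t' →
      minDistSet (Cs t : Set (Fin ℓ → AdjoinRoot (f t))) ≤
        minDistSet (Cs t' : Set (Fin ℓ → AdjoinRoot (f t')))) :
    -- Jensen bound: every nonzero codeword of the concatenated code C has weight at
    -- least min_{1 ≤ e ≤ g} d(C_e) · d(⟨θ_1⟩ ⊕ ⋯ ⊕ ⟨θ_e⟩)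
    ∀ c ∈ concatCode ψ Cs, c ≠ 0 →
      ∃ e : Fin s,
        minDistSet (Cs e : Set (Fin ℓ → AdjoinRoot (f e))) * minDistSet (idemSumCode ψ e)
          ≤ ∑ i : Fin m, wtv (c i) :=
  stmt7_general F m ℓ s hm f hirr hmonic hdist hprod ψ hinj hrange Cs
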